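/- Let X ∈ ℝ^{n×m} have full column rank and m ≤ k ≤ n, and let 1 ≤ ℓ ≤ m. Then Σ_{S ⊆ [n], |S|=k} det(X_Sᵀ X_S) · E_ℓ((X_Sᵀ X_S)⁻¹) ≤ C(n−m+ℓ, k−m+ℓ) · E_{m−ℓ}(Xᵀ X), where the summand is taken to be E_{m-ℓ}(X_SᵀX_S) (which equals det(X_SᵀX_S)·E_ℓ((X_SᵀX_S)⁻¹) when X_SᵀX_S is invertible), with equality when X_Sᵀ X_S is positive definite for all S of size k. -/

import Mathlib

/-!
For a real symmetric matrix `M`, `E_j(M)` is the sum of the `j × j` principal minors of `M`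
(compare the coefficients of the characteristic polynomial, via Vieta on the eigenvalues).
A principal minor of `X_Sᵀ X_S` on the columns `T` is the Gram determinant of the block `X_{S,T}`.
Expanding `det (Yᵀ D_S Y)` (with `D_S` the `0/1` diagonal of `S`) multilinearly in its rows
gives one term per map `f : T → [n]`; the terms of non-injective `f` vanish, and the term of an
injective `f` occurs for exactly `C(n - |T|, k - |T|)` of the `k`-sets `S ⊇ range f`. Summing
over `S` therefore reproduces `C(n - |T|, k - |T|) · det (Yᵀ Y)`, so the inequality is an
equality.
-/

open Matrix Finset

open Classical in
/-- `Esymm ℓ M` : the ℓ-th elementary symmetric polynomial of the eigenvalues of the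
(symmetric) matrix `M`. -/
noncomputable def Esymm {m : ℕ} (ℓ : ℕ) (M : Matrix (Fin m) (Fin m) ℝ) : ℝ :=
  if h : M.IsHermitian then
    ∑ S ∈ Finset.powersetCard ℓ (Finset.univ : Finset (Fin m)), ∏ i ∈ S, h.eigenvalues i
  else 0

/-- The submatrix of `X` keeping only the rows indexed by `S`. -/
def rowSub {n m : ℕ} (X : Matrix (Fin n) (Fin m) ℝ) (S : Finset (Fin n)) :
    Matrix {i // i ∈ S} (Fin m) ℝ :=
  X.submatrix Subtype.val id

namespace Matrix

variable {ι κ R : Type*} [CommRing R]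

-- The ascription `(id : κ → κ)` matters: without it `*` elaborates with `CStarMatrix`'s instance.
theorem transpose_mul_self_submatrix_subtype [Fintype ι] [DecidableEq ι] (Y : Matrix ι κ R)
    (S : Finset ι) :
    (Y.submatrix (Subtype.val : S → ι) (id : κ → κ))ᵀ *
        Y.submatrix (Subtype.val : S → ι) (id : κ → κ)
      = Yᵀ * diagonal (fun i => if i ∈ S then (1 : R) else 0) * Y := by
  ext p q
  rw [mul_apply, mul_apply]
  simp only [mul_diagonal, transpose_apply, submatrix_apply, id, mul_ite, ite_mul, mul_one,
    mul_zero, zero_mul, sum_ite_mem, univ_inter]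
  exact sum_coe_sort S fun i => Y i p * Y i q

variable [Fintype κ] [DecidableEq κ]

theorem det_submatrix_eq_zero_of_not_injective (B : Matrix ι κ R) {f : κ → ι}
    (hf : ¬ Function.Injective f) : det (B.submatrix f id) = 0 := by
  obtain ⟨p, q, hfpq, hpq⟩ := Function.not_injective_iff.mp hf
  exact det_zero_of_row_eq hpq (by ext r; simp [hfpq])

variable [Fintype ι]

theorem det_mul_eq_sum_prod_mul_det_submatrix (A : Matrix κ ι R) (B : Matrix ι κ R) :
    det (A * B) = ∑ f : κ → ι, (∏ p, A p (f p)) * det (B.submatrix f id) := by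
  classical
  have hrows : A * B = of fun p => ∑ i, A p i • B i := by
    ext p q
    simp [mul_apply, Finset.sum_apply]
  rw [hrows]
  change detRowAlternating.toMultilinearMap (fun p => ∑ i, A p i • B i) = _
  rw [MultilinearMap.map_sum]
  refine sum_congr rfl fun f _ => ?_
  rw [MultilinearMap.map_smul_univ, smul_eq_mul]
  rfl

variable [DecidableEq ι]

theorem sum_powersetCard_det_transpose_mul_self_submatrix (Y : Matrix ι κ R) {k : ℕ}
    (hk : Fintype.card κ ≤ k) :
    ∑ S ∈ powersetCard k univ,
        det ((Y.submatrix (Subtype.val : S → ι) (id : κ → κ))ᵀ *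
          Y.submatrix (Subtype.val : S → ι) (id : κ → κ))
      = ((Fintype.card ι - Fintype.card κ).choose (k - Fintype.card κ) : R) * det (Yᵀ * Y) := by
  set c : (κ → ι) → R := fun f => (∏ p, Y (f p) p) * det (Y.submatrix f id)
  have hexpand (S : Finset ι) :
      det ((Y.submatrix (Subtype.val : S → ι) (id : κ → κ))ᵀ *
          Y.submatrix (Subtype.val : S → ι) (id : κ → κ))
        = ∑ f : κ → ι, if univ.image f ⊆ S then c f else 0 := by
    rw [transpose_mul_self_submatrix_subtype, det_mul_eq_sum_prod_mul_det_submatrix]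
    refine sum_congr rfl fun f _ => ?_
    simp only [mul_diagonal, transpose_apply, prod_mul_distrib, prod_boole, image_subset_iff,
      mem_univ, true_imp_iff, c]
    split_ifs <;> ring
  have hcount (f : κ → ι) :
      #{S ∈ powersetCard k univ | univ.image f ⊆ S} • c f
        = ((Fintype.card ι - Fintype.card κ).choose (k - Fintype.card κ) : R) * c f := by
    by_cases hf : Function.Injective f
    · have hcard : #(univ.image f) = Fintype.card κ := by
        rw [card_image_of_injective _ hf, card_univ]
      rw [card_filter_powersetCard_subset _ _ _ (subset_univ _) (hcard ▸ hk), hcard, card_univ,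
        nsmul_eq_mul]
    · simp [c, det_submatrix_eq_zero_of_not_injective Y hf]
  calc ∑ S ∈ powersetCard k univ,
        det ((Y.submatrix (Subtype.val : S → ι) (id : κ → κ))ᵀ *
          Y.submatrix (Subtype.val : S → ι) (id : κ → κ))
      = ∑ f : κ → ι, #{S ∈ powersetCard k univ | univ.image f ⊆ S} • c f := by
        rw [sum_congr rfl fun S _ => hexpand S, sum_comm]
        exact sum_congr rfl fun f _ => by rw [← sum_filter, sum_const]
    _ = _ := by
        simp only [hcount, ← mul_sum, det_mul_eq_sum_prod_mul_det_submatrix, transpose_apply, c]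

end Matrix

theorem esymm_eq_sum_det_submatrix {m j : ℕ} {M : Matrix (Fin m) (Fin m) ℝ}
    (hM : M.IsHermitian) (hj : j ≤ m) :
    Esymm j M =
      ∑ T ∈ powersetCard j univ, det (M.submatrix (Subtype.val : T → Fin m) Subtype.val) := by
  have hminors := M.charpoly_coeff_eq_sum_minors j (by simpa using hj)
  have hvieta : M.charpoly.coeff (m - j) = (-1) ^ j * Esymm j M := by
    rw [hM.charpoly_eq, Esymm, dif_pos hM, ← Finset.esymm_map_val]
    have := Multiset.prod_X_sub_C_coeff (univ.val.map hM.eigenvalues) (k := m - j) (by simp)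
    simp only [Multiset.card_map, card_val, card_univ, Fintype.card_fin, Multiset.map_map] at this
    rw [Nat.sub_sub_self hj] at this
    simpa [Finset.prod] using this
  rw [Fintype.card_fin, hvieta] at hminors
  exact mul_left_cancel₀ (pow_ne_zero _ (neg_ne_zero.mpr one_ne_zero)) hminors

theorem esymm_transpose_mul_self_eq_sum_det {ι : Type*} [Fintype ι] {m j : ℕ}
    (A : Matrix ι (Fin m) ℝ) (hj : j ≤ m) :
    Esymm j (Aᵀ * A) = ∑ T ∈ powersetCard j univ,
      det ((A.submatrix id (Subtype.val : T → Fin m))ᵀ * A.submatrix id Subtype.val) := by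
  have hA : (Aᵀ * A).IsHermitian := by
    simpa only [conjTranspose_eq_transpose_of_trivial] using isHermitian_conjTranspose_mul_self A
  rw [esymm_eq_sum_det_submatrix hA hj]
  refine sum_congr rfl fun T _ => ?_
  rw [submatrix_mul _ _ _ id _ Function.bijective_id, transpose_submatrix]

theorem sum_powersetCard_esymm_rowSub {n m : ℕ} (X : Matrix (Fin n) (Fin m) ℝ) {k ℓ : ℕ}
    (hmk : m ≤ k) (hkn : k ≤ n) (hℓm : ℓ ≤ m) :
    ∑ S ∈ powersetCard k univ, Esymm (m - ℓ) ((rowSub X S)ᵀ * rowSub X S)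
      = ((n - m + ℓ).choose (k - m + ℓ) : ℝ) * Esymm (m - ℓ) (Xᵀ * X) := by
  calc ∑ S ∈ powersetCard k univ, Esymm (m - ℓ) ((rowSub X S)ᵀ * rowSub X S)
      = ∑ T ∈ powersetCard (m - ℓ) univ, ∑ S ∈ powersetCard k univ,
          det (((X.submatrix id (Subtype.val : T → Fin m)).submatrix
            (Subtype.val : S → Fin n) (id : T → T))ᵀ *
            (X.submatrix id (Subtype.val : T → Fin m)).submatrix
              (Subtype.val : S → Fin n) (id : T → T)) := by
        rw [sum_comm]
        exact sum_congr rfl fun S _ => esymm_transpose_mul_self_eq_sum_det _ (Nat.sub_le m ℓ)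
    _ = ∑ T ∈ powersetCard (m - ℓ) univ, ((n - m + ℓ).choose (k - m + ℓ) : ℝ) *
          det ((X.submatrix id (Subtype.val : T → Fin m))ᵀ * X.submatrix id Subtype.val) := by
        refine sum_congr rfl fun T hT => ?_
        have hcard : Fintype.card T = m - ℓ := by simpa using (mem_powersetCard.mp hT).2
        rw [sum_powersetCard_det_transpose_mul_self_submatrix _ (hcard.le.trans (by omega)),
          hcard, Fintype.card_fin, show n - (m - ℓ) = n - m + ℓ by omega,
          show k - (m - ℓ) = k - m + ℓ by omega]
    _ = _ := by rw [← mul_sum, esymm_transpose_mul_self_eq_sum_det X (Nat.sub_le m ℓ)]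

theorem sum_det_mul_esymm_inv_le_general {n m : ℕ} (X : Matrix (Fin n) (Fin m) ℝ)
    (k : ℕ) (hmk : m ≤ k) (hkn : k ≤ n)
    (ℓ : ℕ) (h2 : ℓ ≤ m) :
    (∑ S ∈ Finset.powersetCard k (Finset.univ : Finset (Fin n)),
        Esymm (m - ℓ) ((rowSub X S)ᵀ * rowSub X S) ≤
      ((n - m + ℓ).choose (k - m + ℓ) : ℝ) * Esymm (m - ℓ) (Xᵀ * X)) ∧
    ((∀ S ∈ Finset.powersetCard k (Finset.univ : Finset (Fin n)),
        ((rowSub X S)ᵀ * rowSub X S).PosDef) →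
      ∑ S ∈ Finset.powersetCard k (Finset.univ : Finset (Fin n)),
          Esymm (m - ℓ) ((rowSub X S)ᵀ * rowSub X S) =
        ((n - m + ℓ).choose (k - m + ℓ) : ℝ) * Esymm (m - ℓ) (Xᵀ * X)) :=
  have h := sum_powersetCard_esymm_rowSub X hmk hkn h2
  ⟨h.le, fun _ => h⟩

theorem sum_det_mul_esymm_inv_le {n m : ℕ} (X : Matrix (Fin n) (Fin m) ℝ)
    (hX : X.rank = m) (k : ℕ) (hmk : m ≤ k) (hkn : k ≤ n)
    (ℓ : ℕ) (h1 : 1 ≤ ℓ) (h2 : ℓ ≤ m) :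
    (∑ S ∈ Finset.powersetCard k (Finset.univ : Finset (Fin n)),
        Esymm (m - ℓ) ((rowSub X S)ᵀ * rowSub X S) ≤
      ((n - m + ℓ).choose (k - m + ℓ) : ℝ) * Esymm (m - ℓ) (Xᵀ * X)) ∧
    ((∀ S ∈ Finset.powersetCard k (Finset.univ : Finset (Fin n)),
        ((rowSub X S)ᵀ * rowSub X S).PosDef) →
      ∑ S ∈ Finset.powersetCard k (Finset.univ : Finset (Fin n)),
          Esymm (m - ℓ) ((rowSub X S)ᵀ * rowSub X S) =
        ((n - m + ℓ).choose (k - m + ℓ) : ℝ) * Esymm (m - ℓ) (Xᵀ * X)) :=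
  sum_det_mul_esymm_inv_le_general X k hmk hkn ℓ h2
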